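/- arXiv:quant-ph/0409146 — 2 statements merged into one kernel-verified Lean document; each statement's English description precedes it below -/
import Mathlib

section
/- For the classical Kepler problem, the Runge–Lenz vector satisfies {M_i, M_j} = −2H ε_{ijk} L_k, where H = |p|²/2 − 1/|r|. -/
noncomputable section

/-- Phase space ℝ³ × ℝ³ with coordinates (r, p). -/
abbrev Phase := (Fin 3 → ℝ) × (Fin 3 → ℝ)

/-- The standard Poisson bracket {f,g} = Σ_k (∂f/∂r_k ∂g/∂p_k − ∂f/∂p_k ∂g/∂r_k). -/
def pb (f g : Phase → ℝ) (x : Phase) : ℝ :=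
  ∑ k : Fin 3,
    (fderiv ℝ f x (Pi.single k 1, 0) * fderiv ℝ g x (0, Pi.single k 1)
      - fderiv ℝ f x (0, Pi.single k 1) * fderiv ℝ g x (Pi.single k 1, 0))

/-- The Levi-Civita symbol on Fin 3. -/
def eps (i j k : Fin 3) : ℝ :=
  if (i, j, k) ∈ [((0 : Fin 3), (1 : Fin 3), (2 : Fin 3)), (1, 2, 0), (2, 0, 1)] then 1
  else if (i, j, k) ∈ [((0 : Fin 3), (2 : Fin 3), (1 : Fin 3)), (2, 1, 0), (1, 0, 2)] then -1
  else 0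

/-- Euclidean norm on ℝ³. -/
def euclNorm (v : Fin 3 → ℝ) : ℝ := Real.sqrt (∑ k : Fin 3, v k ^ 2)

/-- Euclidean dot product on ℝ³. -/
def edot (v w : Fin 3 → ℝ) : ℝ := ∑ k : Fin 3, v k * w k

/-- Angular momentum L_i = ε_{ijk} r_j p_k. -/
def angL (i : Fin 3) (x : Phase) : ℝ :=
  ∑ j : Fin 3, ∑ k : Fin 3, eps i j k * x.1 j * x.2 k

/-- The Kepler Hamiltonian H = |p|²/2 − 1/|r|. -/
def ham (x : Phase) : ℝ := (∑ k : Fin 3, x.2 k ^ 2) / 2 - 1 / euclNorm x.1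

/-- The Runge–Lenz vector M = p × L − r/|r|. -/
def rlM (i : Fin 3) (x : Phase) : ℝ :=
  (∑ j : Fin 3, ∑ k : Fin 3, eps i j k * x.2 j * angL k x) - x.1 i / euclNorm x.1

/-
Expanding the double cross product, M = |p|² r − (r·p) p − r/|r|, so the gradients of M_i are
  ∇_r M_i = (|p|² − 1/|r|) e_i − p_i p + (r_i/|r|³) r,    ∇_p M_i = 2 r_i p − (r·p) e_i − p_i r,
and {M_i, M_j} = ∇_r M_i · ∇_p M_j − ∇_p M_i · ∇_r M_j. In this difference every term symmetric
in i and j cancels, and what survives is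
  (|p|² − 2/|r|)(p_i r_j − r_i p_j) = −2H (r_i p_j − r_j p_i) = −2H ε_ijk L_k.
-/

open scoped Matrix

theorem HasFDerivAt.dotProduct {E ι : Type*} [NormedAddCommGroup E] [NormedSpace ℝ E] [Fintype ι]
    {f g : E → ι → ℝ} {f' g' : E →L[ℝ] ι → ℝ} {x : E}
    (hf : HasFDerivAt f f' x) (hg : HasFDerivAt g g' x) :
    HasFDerivAt (fun y => f y ⬝ᵥ g y)
      (∑ k, (f x k • (ContinuousLinearMap.proj k ∘L g') +
        g x k • (ContinuousLinearMap.proj k ∘L f'))) x :=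
  HasFDerivAt.fun_sum fun k _ => (hasFDerivAt_pi'.1 hf k).mul (hasFDerivAt_pi'.1 hg k)

lemma dotProduct_self_nonneg {n : Type*} [Fintype n] (v : n → ℝ) : 0 ≤ v ⬝ᵥ v :=
  Finset.sum_nonneg fun k _ => mul_self_nonneg (v k)

lemma dotProduct_self_pos {n : Type*} [Fintype n] {v : n → ℝ} (hv : v ≠ 0) : 0 < v ⬝ᵥ v :=
  (dotProduct_self_nonneg v).lt_of_ne (Ne.symm (dotProduct_self_eq_zero.not.mpr hv))

lemma euclNorm_eq_sqrt (v : Fin 3 → ℝ) : euclNorm v = √(v ⬝ᵥ v) := by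
  simp [euclNorm, dotProduct, sq]

lemma euclNorm_sq (v : Fin 3 → ℝ) : euclNorm v ^ 2 = v ⬝ᵥ v := by
  rw [euclNorm_eq_sqrt, Real.sq_sqrt (dotProduct_self_nonneg v)]

lemma euclNorm_pos {v : Fin 3 → ℝ} (hv : v ≠ 0) : 0 < euclNorm v := by
  rw [euclNorm_eq_sqrt]; exact Real.sqrt_pos.mpr (dotProduct_self_pos hv)

lemma pb_eq_of_fderiv_eq_dotProduct {f g : Phase → ℝ} {x : Phase} {a b c d : Fin 3 → ℝ}
    (hf : ∀ v, fderiv ℝ f x v = a ⬝ᵥ v.1 + b ⬝ᵥ v.2)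
    (hg : ∀ v, fderiv ℝ g x v = c ⬝ᵥ v.1 + d ⬝ᵥ v.2) :
    pb f g x = a ⬝ᵥ d - b ⬝ᵥ c := by
  simp only [pb, hf, hg, dotProduct_single_one, dotProduct_zero, add_zero, zero_add]
  simp [dotProduct, Finset.sum_sub_distrib]

lemma sum_eps_mul_mul_eq_cross (i : Fin 3) (u v : Fin 3 → ℝ) :
    ∑ j, ∑ k, eps i j k * u j * v k = (u ⨯₃ v) i := by
  fin_cases i <;> simp [eps, cross_apply, Fin.sum_univ_three] <;> ring

lemma angL_eq_cross (i : Fin 3) (x : Phase) : angL i x = (x.1 ⨯₃ x.2) i :=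
  sum_eps_mul_mul_eq_cross i x.1 x.2

lemma sum_eps_mul_angL (i j : Fin 3) (x : Phase) :
    ∑ k, eps i j k * angL k x = x.1 i * x.2 j - x.1 j * x.2 i := by
  fin_cases i <;> fin_cases j <;> simp [eps, angL_eq_cross, cross_apply]

lemma ham_eq (x : Phase) : ham x = x.2 ⬝ᵥ x.2 / 2 - (euclNorm x.1)⁻¹ := by
  simp [ham, dotProduct, sq]

lemma rlM_eq_bac_cab (i : Fin 3) : rlM i = fun x : Phase =>
    x.1 i * (x.2 ⬝ᵥ x.2) - x.2 i * (x.1 ⬝ᵥ x.2) - x.1 i * (euclNorm x.1)⁻¹ := by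
  funext x
  simp only [rlM, angL_eq_cross, sum_eps_mul_mul_eq_cross, cross_cross_eq_smul_sub_smul',
    Pi.sub_apply, Pi.smul_apply, smul_eq_mul, div_eq_mul_inv]
  ring

def rlMGradR (i : Fin 3) (x : Phase) : Fin 3 → ℝ :=
  (x.2 ⬝ᵥ x.2 - (euclNorm x.1)⁻¹) • Pi.single i 1 - x.2 i • x.2 + (x.1 i / euclNorm x.1 ^ 3) • x.1

def rlMGradP (i : Fin 3) (x : Phase) : Fin 3 → ℝ :=
  (2 * x.1 i) • x.2 - (x.1 ⬝ᵥ x.2) • Pi.single i 1 - x.2 i • x.1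

lemma fderiv_rlM_apply (i : Fin 3) {x : Phase} (hx : x.1 ≠ 0) (v : Phase) :
    fderiv ℝ (rlM i) x v = rlMGradR i x ⬝ᵥ v.1 + rlMGradP i x ⬝ᵥ v.2 := by
  have hnorm := (hasFDerivAt_fst.dotProduct hasFDerivAt_fst).sqrt (dotProduct_self_pos hx).ne'
  simp only [← euclNorm_eq_sqrt] at hnorm
  have hinv : HasFDerivAt (fun y : Phase => (euclNorm y.1)⁻¹) _ x :=
    (hasDerivAt_inv (euclNorm_pos hx).ne').comp_hasFDerivAt x hnorm
  have hri := hasFDerivAt_pi'.1 (hasFDerivAt_fst (𝕜 := ℝ) (p := x)) i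
  have hpi := hasFDerivAt_pi'.1 (hasFDerivAt_snd (𝕜 := ℝ) (p := x)) i
  have hM := ((hri.fun_mul (hasFDerivAt_snd.dotProduct hasFDerivAt_snd)).fun_sub
    (hpi.fun_mul (hasFDerivAt_fst.dotProduct hasFDerivAt_snd))).fun_sub (hri.fun_mul hinv)
  rw [rlM_eq_bac_cab, hM.fderiv]
  simp only [rlMGradR, rlMGradP, add_dotProduct, sub_dotProduct, smul_dotProduct,
    single_one_dotProduct, smul_eq_mul]
  simp only [Fin.sum_univ_three, dotProduct, smul_add, one_div, mul_inv_rev, neg_smul, smul_neg,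
    sub_apply, add_apply, smul_apply, neg_apply, ContinuousLinearMap.comp_apply,
    ContinuousLinearMap.coe_fst', ContinuousLinearMap.coe_snd', ContinuousLinearMap.proj_apply,
    smul_eq_mul]
  have hr := (euclNorm_pos hx).ne'
  field_simp
  ring

lemma rlMGradR_dotProduct_rlMGradP_sub (i j : Fin 3) {x : Phase} (hx : x.1 ≠ 0) :
    rlMGradR i x ⬝ᵥ rlMGradP j x - rlMGradP i x ⬝ᵥ rlMGradR j x
      = -2 * ham x * (x.1 i * x.2 j - x.1 j * x.2 i) := by
  simp only [rlMGradR, rlMGradP, add_dotProduct, sub_dotProduct, smul_dotProduct, dotProduct_add,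
    dotProduct_sub, dotProduct_smul, single_one_dotProduct, dotProduct_single_one, Pi.add_apply,
    Pi.sub_apply, Pi.smul_apply, smul_eq_mul]
  rw [ham_eq, dotProduct_comm x.2 x.1, ← euclNorm_sq x.1]
  have hr := (euclNorm_pos hx).ne'
  field_simp
  ring

/-- {M_i, M_j} = −2H ε_{ijk} L_k on the region r ≠ 0. -/
theorem poisson_rlM_rlM (i j : Fin 3) (x : Phase) (hx : x.1 ≠ 0) :
    pb (rlM i) (rlM j) x = -2 * ham x * ∑ k : Fin 3, eps i j k * angL k x := by
  rw [pb_eq_of_fderiv_eq_dotProduct (fderiv_rlM_apply i hx) (fderiv_rlM_apply j hx),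
    rlMGradR_dotProduct_rlMGradP_sub i j hx, sum_eps_mul_angL]
end
end

section
/- The set {L₁, L₂, A₃, S, C} generates the full 15-dimensional Lie algebra so(4,2) under iterated brackets, where the elements are identified via the abstract commutation relations: [L_i, L_j] = ε_{ijk}L_k, [L_i, A_j] = ε_{ijk}A_k, [A_i, A_j] = ε_{ijk}L_k, [S, A_i] = B_i, [A_i, B_j] = δ_{ij}S, [C, A_i] = Γ_i, [C, S] = −D, [S, D] = C, [D, C] = S, [Γ_i, A_j] = −δ_{ij}C, [Γ_i, B_j] = −δ_{ij}D, [D, B_i] = −Γ_i, [Γ_i, C] = −A_i, [Γ_i, D] = −B_i, [S, B_i] = A_i, [L_i, B_j] = ε_{ijk}B_k, [L_i, Γ_j] = ε_{ijk}Γ_k, [B_i, B_j] = −ε_{ijk}L_k, [Γ_i, Γ_j] = −ε_{ijk}L_k, with all other brackets among the 15 generators zero ([L_i,S]=[L_i,C]=[L_i,D]=[D,A_i]=[C,B_i]=[Γ_i,S]=0). -/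
noncomputable section

/-- In the 15-dimensional real Lie algebra so(4,2) with basis
{L₁,L₂,L₃,A₁,A₂,A₃,B₁,B₂,B₃,Γ₁,Γ₂,Γ₃,S,C,D} and the stated bracket relations,
the five elements L₁, L₂, A₃, S, C generate the whole algebra. -/
theorem five_generators_generate_so42
    {g : Type*} [LieRing g] [LieAlgebra ℝ g]
    (L A B Γ : Fin 3 → g) (S C D : g)
    (hindep : LinearIndependent ℝ
      (![L 0, L 1, L 2, A 0, A 1, A 2, B 0, B 1, B 2, Γ 0, Γ 1, Γ 2, S, C, D] :
        Fin 15 → g))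
    (hspan : Submodule.span ℝ
      ({L 0, L 1, L 2, A 0, A 1, A 2, B 0, B 1, B 2, Γ 0, Γ 1, Γ 2, S, C, D} : Set g) = ⊤)
    (hLL : ∀ i j, ⁅L i, L j⁆ = ∑ k : Fin 3, eps i j k • L k)
    (hLA : ∀ i j, ⁅L i, A j⁆ = ∑ k : Fin 3, eps i j k • A k)
    (hAA : ∀ i j, ⁅A i, A j⁆ = ∑ k : Fin 3, eps i j k • L k)
    (hSA : ∀ i, ⁅S, A i⁆ = B i)
    (hAB : ∀ i j, ⁅A i, B j⁆ = if i = j then S else 0)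
    (hCA : ∀ i, ⁅C, A i⁆ = Γ i)
    (hCS : ⁅C, S⁆ = -D)
    (hSD : ⁅S, D⁆ = C)
    (hDC : ⁅D, C⁆ = S)
    (hGA : ∀ i j, ⁅Γ i, A j⁆ = if i = j then -C else 0)
    (hGB : ∀ i j, ⁅Γ i, B j⁆ = if i = j then -D else 0)
    (hDB : ∀ i, ⁅D, B i⁆ = -Γ i)
    (hGC : ∀ i, ⁅Γ i, C⁆ = -A i)
    (hGD : ∀ i, ⁅Γ i, D⁆ = -B i)
    (hSB : ∀ i, ⁅S, B i⁆ = A i)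
    (hLB : ∀ i j, ⁅L i, B j⁆ = ∑ k : Fin 3, eps i j k • B k)
    (hLG : ∀ i j, ⁅L i, Γ j⁆ = ∑ k : Fin 3, eps i j k • Γ k)
    (hBB : ∀ i j, ⁅B i, B j⁆ = -∑ k : Fin 3, eps i j k • L k)
    (hGG : ∀ i j, ⁅Γ i, Γ j⁆ = -∑ k : Fin 3, eps i j k • L k)
    (hLS : ∀ i, ⁅L i, S⁆ = 0)
    (hLC : ∀ i, ⁅L i, C⁆ = 0)
    (hLD : ∀ i, ⁅L i, D⁆ = 0)
    (hDA : ∀ i, ⁅D, A i⁆ = 0)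
    (hCB : ∀ i, ⁅C, B i⁆ = 0)
    (hGS : ∀ i, ⁅Γ i, S⁆ = 0) :
    LieSubalgebra.lieSpan ℝ g ({L 0, L 1, A 2, S, C} : Set g) = ⊤ := by

  set H := LieSubalgebra.lieSpan ℝ g ({L 0, L 1, A 2, S, C} : Set g) with hH
  have hL0 : L 0 ∈ H := LieSubalgebra.subset_lieSpan (by simp)
  have hL1 : L 1 ∈ H := LieSubalgebra.subset_lieSpan (by simp)
  have hA2 : A 2 ∈ H := LieSubalgebra.subset_lieSpan (by simp)
  have hS : S ∈ H := LieSubalgebra.subset_lieSpan (by simp)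
  have hC : C ∈ H := LieSubalgebra.subset_lieSpan (by simp)
  have hL2 : L 2 ∈ H := by
    have h := hLL 0 1
    simp [eps, Fin.sum_univ_three] at h
    rw [← h]; exact H.lie_mem hL0 hL1
  have hA0 : A 0 ∈ H := by
    have h := hLA 1 2
    simp [eps, Fin.sum_univ_three] at h
    rw [← h]; exact H.lie_mem hL1 hA2
  have hA1 : A 1 ∈ H := by
    have h := hLA 0 2
    simp [eps, Fin.sum_univ_three] at h
    have : A 1 = (-1 : ℝ) • ⁅L 0, A 2⁆ := by rw [h]; module
    rw [this]; exact H.smul_mem _ (H.lie_mem hL0 hA2)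
  have hA : ∀ i, A i ∈ H := by
    intro i; fin_cases i <;> assumption
  have hB : ∀ i, B i ∈ H := fun i => by
    rw [← hSA i]; exact H.lie_mem hS (hA i)
  have hG : ∀ i, Γ i ∈ H := fun i => by
    rw [← hCA i]; exact H.lie_mem hC (hA i)
  have hD : D ∈ H := by
    have : D = (-1 : ℝ) • ⁅C, S⁆ := by rw [hCS]; module
    rw [this]; exact H.smul_mem _ (H.lie_mem hC hS)
  rw [eq_top_iff]
  intro x _
  have hx : x ∈ Submodule.span ℝ
      ({L 0, L 1, L 2, A 0, A 1, A 2, B 0, B 1, B 2, Γ 0, Γ 1, Γ 2, S, C, D} : Set g) := by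
    rw [hspan]; trivial
  have hle : Submodule.span ℝ
      ({L 0, L 1, L 2, A 0, A 1, A 2, B 0, B 1, B 2, Γ 0, Γ 1, Γ 2, S, C, D} : Set g)
      ≤ H.toSubmodule := by
    rw [Submodule.span_le]
    intro y hy
    simp only [Set.mem_insert_iff, Set.mem_singleton_iff] at hy
    rcases hy with h|h|h|h|h|h|h|h|h|h|h|h|h|h|h <;> subst h <;>
      first
        | exact hL0 | exact hL1 | exact hL2 | exact hA 0 | exact hA 1 | exact hA 2
        | exact hB 0 | exact hB 1 | exact hB 2 | exact hG 0 | exact hG 1 | exact hG 2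
        | exact hS | exact hC | exact hD
  exact hle hx
end
end
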